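/- arXiv:1303.0031 — 2 statements merged into one kernel-verified Lean document; each statement's English description precedes it below -/
import Mathlib

section
/- Let $\Pi_t$ be a Poisson random variable with mean $\delta t$ (where $\delta, t > 0$) and let $a_1, a_2 \in (0,1)$ with $a_1 \neq a_2$. Then $\delta^2 \cdot \mathbb{E}\left[\frac{t^2}{(\Pi_t+1)(\Pi_t+2)} \sum_{n_1+n_2 \leq \Pi_t} a_1^{n_2} a_2^{n_1}\right] = \frac{1}{(1-a_1)(1-a_2)} - \frac{\frac{e^{-(1-a_1)\delta t}}{1-a_1} - \frac{e^{-(1-a_2)\delta t}}{1-a_2}}{a_1 - a_2}$. -/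
set_option maxHeartbeats 1000000

open Finset

lemma exp_tsum' (x : ℝ) : ∑' n : ℕ, x ^ n / n.factorial = Real.exp x := by
  rw [Real.exp_eq_exp_ℝ, NormedSpace.exp_eq_tsum_div]

lemma expshift (x : ℝ) : ∑' n : ℕ, x ^ (n + 2) / (n + 2).factorial = Real.exp x - 1 - x := by
  have hs := Real.summable_pow_div_factorial x
  have h := (Summable.sum_add_tsum_nat_add (f := fun n : ℕ => x ^ n / n.factorial) 2 hs).symm
  rw [← exp_tsum' x, h]
  simp [Finset.sum_range_succ, Nat.factorial]
  ring

lemma rowsum (x y : ℝ) (m : ℕ) :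
    (∑ i ∈ Finset.range m, y ^ i * x ^ (m - 1 - i)) * (x - y) = x ^ m - y ^ m := by
  linear_combination (-1 : ℝ) * geom_sum₂_mul y x m

lemma Sclosed (a₁ a₂ : ℝ) (h1 : (1:ℝ) - a₁ ≠ 0) (h2 : (1:ℝ) - a₂ ≠ 0) (h : a₁ - a₂ ≠ 0)
    (n : ℕ) :
    (∑ n₁ ∈ Finset.range (n + 1), ∑ n₂ ∈ Finset.range (n + 1 - n₁), a₁ ^ n₂ * a₂ ^ n₁)
      = 1 / ((1 - a₁) * (1 - a₂))
        - (a₁ ^ (n + 2) / (1 - a₁) - a₂ ^ (n + 2) / (1 - a₂)) / (a₁ - a₂) := by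
  induction n with
  | zero => simp; field_simp; ring
  | succ n ih =>
    have hstep : (∑ n₁ ∈ Finset.range (n + 2), ∑ n₂ ∈ Finset.range (n + 2 - n₁), a₁ ^ n₂ * a₂ ^ n₁)
        = (∑ n₁ ∈ Finset.range (n + 1), ∑ n₂ ∈ Finset.range (n + 1 - n₁), a₁ ^ n₂ * a₂ ^ n₁)
          + ∑ i ∈ Finset.range (n + 2), a₂ ^ i * a₁ ^ (n + 2 - 1 - i) := by
      rw [Finset.sum_range_succ]
      have : ∀ n₁ ∈ Finset.range (n + 1),
          (∑ n₂ ∈ Finset.range (n + 2 - n₁), a₁ ^ n₂ * a₂ ^ n₁)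
          = (∑ n₂ ∈ Finset.range (n + 1 - n₁), a₁ ^ n₂ * a₂ ^ n₁) + a₂ ^ n₁ * a₁ ^ (n + 2 - 1 - n₁) := by
        intro n₁ hn₁
        rw [Finset.mem_range] at hn₁
        have h1 : n + 2 - n₁ = (n + 1 - n₁) + 1 := by omega
        have h2 : n + 2 - 1 - n₁ = n + 1 - n₁ := by omega
        rw [h1, Finset.sum_range_succ, h2]; ring
      have e0 : n + 2 - (n + 1) = 1 := by omega
      have e1 : n + 2 - 1 - (n + 1) = 0 := by omega
      have hr : ∑ i ∈ Finset.range (n + 2), a₂ ^ i * a₁ ^ (n + 2 - 1 - i)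
          = (∑ i ∈ Finset.range (n + 1), a₂ ^ i * a₁ ^ (n + 2 - 1 - i)) + a₂ ^ (n + 1) := by
        rw [Finset.sum_range_succ, e1, pow_zero, mul_one]
      rw [Finset.sum_congr rfl this, Finset.sum_add_distrib, hr, e0]
      simp only [Finset.sum_range_one, pow_zero, one_mul, mul_one]
      ring
    rw [hstep, ih]
    have hrow : (∑ i ∈ Finset.range (n + 2), a₂ ^ i * a₁ ^ (n + 2 - 1 - i))
        = (a₁ ^ (n + 2) - a₂ ^ (n + 2)) / (a₁ - a₂) := by
      field_simp
      exact rowsum a₁ a₂ (n + 2)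
    rw [hrow]
    field_simp
    ring

theorem stmt_7 (δ t a₁ a₂ : ℝ) (hδ : 0 < δ) (ht : 0 < t)
    (ha₁ : a₁ ∈ Set.Ioo (0 : ℝ) 1) (ha₂ : a₂ ∈ Set.Ioo (0 : ℝ) 1) (h : a₁ ≠ a₂) :
    δ ^ 2 * ∑' n : ℕ, (δ * t) ^ n / n.factorial * Real.exp (-(δ * t))
        * (t ^ 2 / ((n + 1) * (n + 2))
            * ∑ n₁ ∈ Finset.range (n + 1), ∑ n₂ ∈ Finset.range (n + 1 - n₁),
                a₁ ^ n₂ * a₂ ^ n₁)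
      = 1 / ((1 - a₁) * (1 - a₂))
        - (Real.exp (-(1 - a₁) * (δ * t)) / (1 - a₁)
            - Real.exp (-(1 - a₂) * (δ * t)) / (1 - a₂)) / (a₁ - a₂) := by
  obtain ⟨ha₁0, ha₁1⟩ := ha₁
  obtain ⟨ha₂0, ha₂1⟩ := ha₂
  have h1 : (1:ℝ) - a₁ ≠ 0 := by linarith
  have h2 : (1:ℝ) - a₂ ≠ 0 := by linarith
  have h12 : a₁ - a₂ ≠ 0 := sub_ne_zero.mpr h
  set E : ℝ := Real.exp (-(δ * t)) with hE
  have hEpos : 0 < E := Real.exp_pos _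
  set c₀ : ℝ := 1 / ((1 - a₁) * (1 - a₂)) with hc₀
  set k₁ : ℝ := 1 / ((1 - a₁) * (a₁ - a₂)) with hk₁
  set k₂ : ℝ := 1 / ((1 - a₂) * (a₁ - a₂)) with hk₂
  have hterm : ∀ n : ℕ,
      δ ^ 2 * ((δ * t) ^ n / n.factorial * E
        * (t ^ 2 / ((n + 1) * (n + 2))
            * ∑ n₁ ∈ Finset.range (n + 1), ∑ n₂ ∈ Finset.range (n + 1 - n₁),
                a₁ ^ n₂ * a₂ ^ n₁))
      = E * (c₀ * ((δ * t) ^ (n + 2) / (n + 2).factorial)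
          - k₁ * ((a₁ * (δ * t)) ^ (n + 2) / (n + 2).factorial)
          + k₂ * ((a₂ * (δ * t)) ^ (n + 2) / (n + 2).factorial)) := by
    intro n
    rw [Sclosed a₁ a₂ h1 h2 h12 n]
    have hfac : ((n + 2).factorial : ℝ) = ((n:ℝ) + 2) * ((n:ℝ) + 1) * n.factorial := by
      rw [show n + 2 = (n + 1) + 1 by ring, Nat.factorial_succ, Nat.factorial_succ]
      push_cast; ring
    have hfne : (n.factorial : ℝ) ≠ 0 := Nat.cast_ne_zero.mpr n.factorial_ne_zero
    have hn1 : (n:ℝ) + 1 ≠ 0 := by positivity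
    have hn2 : (n:ℝ) + 2 ≠ 0 := by positivity
    rw [hfac, hc₀, hk₁, hk₂]
    field_simp
    ring
  have hsum0 : Summable (fun n : ℕ => (δ * t) ^ (n + 2) / ((n + 2).factorial : ℝ)) :=
    (summable_nat_add_iff 2).mpr (Real.summable_pow_div_factorial (δ * t))
  have hsum1 : Summable (fun n : ℕ => (a₁ * (δ * t)) ^ (n + 2) / ((n + 2).factorial : ℝ)) :=
    (summable_nat_add_iff 2).mpr (Real.summable_pow_div_factorial _)
  have hsum2 : Summable (fun n : ℕ => (a₂ * (δ * t)) ^ (n + 2) / ((n + 2).factorial : ℝ)) :=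
    (summable_nat_add_iff 2).mpr (Real.summable_pow_div_factorial _)
  rw [← tsum_mul_left]
  rw [tsum_congr hterm]
  rw [tsum_mul_left]
  rw [Summable.tsum_add ((hsum0.mul_left c₀).sub (hsum1.mul_left k₁)) (hsum2.mul_left k₂),
    Summable.tsum_sub (hsum0.mul_left c₀) (hsum1.mul_left k₁),
    tsum_mul_left, tsum_mul_left, tsum_mul_left,
    expshift, expshift, expshift]
  have e1 : Real.exp (-(1 - a₁) * (δ * t)) = E * Real.exp (a₁ * (δ * t)) := by
    rw [hE, ← Real.exp_add]; ring_nf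
  have e2 : Real.exp (-(1 - a₂) * (δ * t)) = E * Real.exp (a₂ * (δ * t)) := by
    rw [hE, ← Real.exp_add]; ring_nf
  have e3 : Real.exp (δ * t) = E⁻¹ := by
    rw [hE, Real.exp_neg, inv_inv]
  rw [e1, e2, e3, hc₀, hk₁, hk₂]
  field_simp
  ring
end

section
/- Let $\Pi_t$ be a Poisson random variable with mean $\delta t$ (where $\delta, t > 0$) and let $a \in (0,1)$. Then $\delta^2 \cdot \mathbb{E}\left[\frac{t^2}{(\Pi_t+1)(\Pi_t+2)} \sum_{n_1+n_2 \leq \Pi_t} a^{n_1+n_2}\right] = \frac{1}{(1-a)^2} - \left(\frac{1}{(1-a)^2} + \frac{\delta t}{1-a}\right) e^{-(1-a)\delta t}$. -/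
/-! Summing the two geometric series gives `∑_{n₁+n₂ ≤ n} a^(n₁+n₂) · (1-a)² =
1 - a^(n+1) - (n+1) a^(n+1) (1-a)`, and the Poisson weight absorbs the factor
`(δt)² / ((n+1)(n+2))` into `(δt)^(n+2) / (n+2)!`. The resulting series splits into three
tails of exponential series, at `δt` and at `aδt`, whose sum is
`e^(δt) - (1 + (1-a)δt) e^(aδt)`; multiplying by `e^(-δt) / (1-a)²` gives the claim. -/

open Finset Nat Real

lemma sum_range_sum_range_sub_pow_add {K : Type*} [Field K] {a : K} (ha : a ≠ 1) (n : ℕ) :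
    ∑ n₁ ∈ range (n + 1), ∑ n₂ ∈ range (n + 1 - n₁), a ^ (n₁ + n₂)
      = ((n + 1) * a ^ (n + 1) * (a - 1) - a ^ (n + 1) + 1) / (a - 1) ^ 2 := by
  have inner : ∀ n₁ ∈ range (n + 1),
      ∑ n₂ ∈ range (n + 1 - n₁), a ^ (n₁ + n₂) = (a ^ (n + 1) - a ^ n₁) / (a - 1) := by
    intro n₁ hn₁
    rw [sum_congr rfl fun n₂ _ => pow_add a n₁ n₂, ← mul_sum, geom_sum_eq ha, mul_div_assoc', mul_sub, ← pow_add, Nat.add_sub_cancel' (mem_range.mp hn₁).le, mul_one]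
  have ha' : a - 1 ≠ 0 := sub_ne_zero.mpr ha
  rw [sum_congr rfl inner, ← sum_div, sum_sub_distrib, sum_const, card_range, nsmul_eq_mul,
    geom_sum_eq ha]
  field_simp
  push_cast
  ring

lemma cast_factorial_add_two (n : ℕ) : ((n + 2)! : ℝ) = n ! * ((n + 1) * (n + 2)) := by
  push_cast [factorial_succ]
  ring

lemma hasSum_pow_add_div_factorial (x : ℝ) (k : ℕ) :
    HasSum (fun n : ℕ => x ^ (n + k) / (n + k)!) (exp x - ∑ i ∈ range k, x ^ i / i !) :=
  (hasSum_nat_add_iff' k).mpr (exp_eq_exp_ℝ ▸ NormedSpace.expSeries_div_hasSum_exp x)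

lemma hasSum_pow_div_factorial_mul_geom (x a : ℝ) :
    HasSum
      (fun n : ℕ => x ^ (n + 2) / (n + 2)! * ((n + 1) * a ^ (n + 1) * (a - 1) - a ^ (n + 1) + 1))
      (exp x - (1 + (1 - a) * x) * exp (a * x)) := by
  have h := ((hasSum_pow_add_div_factorial x 2).add
    ((hasSum_pow_add_div_factorial (a * x) 1).mul_left ((a - 1) * x))).sub
    (hasSum_pow_add_div_factorial (a * x) 2)
  have hval : exp x - ∑ i ∈ range 2, x ^ i / i !
        + (a - 1) * x * (exp (a * x) - ∑ i ∈ range 1, (a * x) ^ i / i !)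
        - (exp (a * x) - ∑ i ∈ range 2, (a * x) ^ i / i !)
      = exp x - (1 + (1 - a) * x) * exp (a * x) := by
    simp only [sum_range_succ, range_one, sum_singleton, pow_zero, pow_one, factorial_zero,
      factorial_one, cast_one, div_one]
    ring
  refine hval ▸ h.congr_fun fun n => ?_
  rw [cast_factorial_add_two, factorial_succ]
  push_cast
  field_simp
  ring

theorem stmt_8_general (δ t a : ℝ) (ha : a ∈ Set.Ioo (0 : ℝ) 1) :
    δ ^ 2 * ∑' n : ℕ, (δ * t) ^ n / n.factorial * Real.exp (-(δ * t))
        * (t ^ 2 / ((n + 1) * (n + 2))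
            * ∑ n₁ ∈ Finset.range (n + 1), ∑ n₂ ∈ Finset.range (n + 1 - n₁),
                a ^ (n₁ + n₂))
      = 1 / (1 - a) ^ 2
        - (1 / (1 - a) ^ 2 + δ * t / (1 - a)) * Real.exp (-(1 - a) * (δ * t)) := by
  have ha1 : a ≠ 1 := ha.2.ne
  have hterm : ∀ n : ℕ,
      δ ^ 2 * ((δ * t) ^ n / n ! * exp (-(δ * t))
        * (t ^ 2 / ((n + 1) * (n + 2))
          * ∑ n₁ ∈ range (n + 1), ∑ n₂ ∈ range (n + 1 - n₁), a ^ (n₁ + n₂)))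
      = exp (-(δ * t)) / (a - 1) ^ 2 * ((δ * t) ^ (n + 2) / (n + 2)!
          * ((n + 1) * a ^ (n + 1) * (a - 1) - a ^ (n + 1) + 1)) := by
    intro n
    rw [sum_range_sum_range_sub_pow_add ha1, cast_factorial_add_two]
    field_simp
    ring
  rw [← tsum_mul_left, tsum_congr hterm, tsum_mul_left,
    (hasSum_pow_div_factorial_mul_geom (δ * t) a).tsum_eq]
  have hexp : exp (-(δ * t)) * (exp (δ * t) - (1 + (1 - a) * (δ * t)) * exp (a * (δ * t)))
      = 1 - (1 + (1 - a) * (δ * t)) * exp (-(1 - a) * (δ * t)) := by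
    rw [mul_sub, ← exp_add, neg_add_cancel, exp_zero, mul_left_comm, ← exp_add]
    ring_nf
  have ha' : 1 - a ≠ 0 := sub_ne_zero.mpr ha1.symm
  rw [div_mul_eq_mul_div, hexp]
  field_simp
  ring

theorem stmt_8 (δ t a : ℝ) (hδ : 0 < δ) (ht : 0 < t) (ha : a ∈ Set.Ioo (0 : ℝ) 1) :
    δ ^ 2 * ∑' n : ℕ, (δ * t) ^ n / n.factorial * Real.exp (-(δ * t))
        * (t ^ 2 / ((n + 1) * (n + 2))
            * ∑ n₁ ∈ Finset.range (n + 1), ∑ n₂ ∈ Finset.range (n + 1 - n₁),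
                a ^ (n₁ + n₂))
      = 1 / (1 - a) ^ 2
        - (1 / (1 - a) ^ 2 + δ * t / (1 - a)) * Real.exp (-(1 - a) * (δ * t)) :=
  stmt_8_general δ t a ha
end
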